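/- Suppose y is a formal power series satisfying the hierarchy ∂y/∂T_{2a+1} = (y^a/a!)·∂y/∂T_1 for all a ≥ 0 together with Σ_{a≥0}((2a+1)/2)·T̃_{2a+1}·∂y/∂T_{2a+1} = −y (where T̃_{2a+1} = T_{2a+1} − δ_{a,0}). Then for every k ≥ 0, Σ_{a≥0}((2a+1)/2)·T̃_{2a+1}·∂(∂_{T_1}^k y)/∂T_{2a+1} = −((k+2)/2)·∂_{T_1}^k y. -/

import Mathlib

noncomputable section

/-- The ring `ℂ[[x+2]][[T_1, T_3, T_5, …]]`; variable `a : ℕ` stands for `T_{2a+1}`. -/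
abbrev OSRing := MvPowerSeries ℕ (PowerSeries ℂ)

/-- Formal partial derivative `∂/∂T_{2a+1}`. -/
def pderivT (a : ℕ) (f : OSRing) : OSRing :=
  fun d => (d a + 1) • MvPowerSeries.coeff (d + Finsupp.single a 1) f

/-- The weighted Euler operator `Σ_{a≥0} ((2a+1)/2)·T_{2a+1}·∂/∂T_{2a+1}`, acting
coefficientwise (the sum is locally finite). -/
def eulerHalf (f : OSRing) : OSRing :=
  fun d => (∑ a ∈ d.support, ((2*(a:ℂ)+1)/2) * (d a : ℂ)) • MvPowerSeries.coeff d f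

/-- The string vector field `L = Σ_{a≥0} ((2a+1)/2)·T̃_{2a+1}·∂/∂T_{2a+1}`, with
`T̃_{2a+1} = T_{2a+1} - δ_{a,0}`. -/
def Lstring (f : OSRing) : OSRing :=
  eulerHalf f - ((1:ℂ)/2) • pderivT 0 f

lemma osring_smul_apply (c : ℂ) (f : OSRing) (d : ℕ →₀ ℕ) : (c • f) d = c • f d := rfl

lemma osring_sub_apply (f g : OSRing) (d : ℕ →₀ ℕ) : (f - g) d = f d - g d := rfl

lemma pderivT_smul (a : ℕ) (c : ℂ) (f : OSRing) :
    pderivT a (c • f) = c • pderivT a f := by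
  funext d
  show (d a + 1) • MvPowerSeries.coeff _ (c • f) = c • ((d a + 1) • MvPowerSeries.coeff _ f)
  rw [MvPowerSeries.coeff_apply, MvPowerSeries.coeff_apply, osring_smul_apply, smul_comm]

lemma pderivT_sub (a : ℕ) (f g : OSRing) :
    pderivT a (f - g) = pderivT a f - pderivT a g := by
  funext d
  show (d a + 1) • MvPowerSeries.coeff _ (f - g) = _ - _
  rw [MvPowerSeries.coeff_apply]
  show (d a + 1) • (f _ - g _) = (d a + 1) • MvPowerSeries.coeff _ f - (d a + 1) • MvPowerSeries.coeff _ g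
  rw [MvPowerSeries.coeff_apply, MvPowerSeries.coeff_apply, smul_sub]

lemma sum_shift (d e : ℕ →₀ ℕ) (he : e = d + Finsupp.single 0 1) :
    (∑ a ∈ e.support, ((2*(a:ℂ)+1)/2) * (e a : ℂ))
      = (∑ a ∈ d.support, ((2*(a:ℂ)+1)/2) * (d a : ℂ)) + 1/2 := by
  subst he
  show (d + Finsupp.single 0 1).sum (fun a n => ((2*(a:ℂ)+1)/2) * (n:ℂ))
      = d.sum (fun a n => ((2*(a:ℂ)+1)/2) * (n:ℂ)) + 1/2
  rw [Finsupp.sum_add_index' (by simp) (by intro a m n; push_cast; ring)]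
  congr 1
  rw [Finsupp.sum_single_index (by simp)]
  norm_num

lemma eulerHalf_pderiv (f : OSRing) :
    eulerHalf (pderivT 0 f)
      = pderivT 0 (eulerHalf f) - ((1:ℂ)/2) • pderivT 0 f := by
  funext d
  have hs := sum_shift d _ rfl
  simp only [eulerHalf, pderivT, MvPowerSeries.coeff_apply, osring_sub_apply,
    osring_smul_apply]
  rw [hs, add_smul (R := ℂ), smul_add, smul_comm (d 0 + 1), smul_comm (d 0 + 1) ((1:ℂ)/2)]
  abel

lemma Lstring_pderiv (f : OSRing) :
    Lstring (pderivT 0 f)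
      = pderivT 0 (Lstring f) - ((1:ℂ)/2) • pderivT 0 f := by
  unfold Lstring
  rw [eulerHalf_pderiv, pderivT_sub, pderivT_smul]
  abel

/-- if `y` satisfies the dispersionless KdV hierarchy
`∂y/∂T_{2a+1} = (y^a/a!)·∂y/∂T_1` together with the genus-zero string equation
`Σ_{a≥0}((2a+1)/2)·T̃_{2a+1}·∂y/∂T_{2a+1} = −y`, then for every `k ≥ 0`,
`Σ_{a≥0}((2a+1)/2)·T̃_{2a+1}·∂(∂_{T_1}^k y)/∂T_{2a+1} = −((k+2)/2)·∂_{T_1}^k y`. -/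
theorem string_equation_jets (y : OSRing)
    (hflow : ∀ a : ℕ, pderivT a y = ((a.factorial : ℂ)⁻¹) • (y ^ a * pderivT 0 y))
    (hstring : Lstring y = -y) :
    ∀ k : ℕ, Lstring ((pderivT 0)^[k] y)
      = (-(((k:ℂ) + 2) / 2)) • (pderivT 0)^[k] y := by
  intro k
  induction k with
  | zero =>
      simpa [neg_div] using hstring
  | succ k ih =>
      rw [Function.iterate_succ_apply', Lstring_pderiv, ih, pderivT_smul]
      rw [← sub_smul]
      congr 1
      push_cast
      ring
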